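/- arXiv:1402.0748 — 4 statements merged into one kernel-verified Lean document; each statement's English description precedes it below -/
import Mathlib

section
/- Let α ∈ ℝ, let A₀ : H → H be continuous with (A₀x − A₀y, x − y) + α|x − y|² ≥ 0 for all x, y ∈ H, and let φ : H → ℝ ∪ {+∞} be proper, convex and lower semicontinuous. Define the subdifferential ∂φ(x) := { w ∈ H : φ(x) < +∞ and φ(x) + (w, z − x) ≤ φ(z) for all z ∈ H } and set A := { (x, A₀x + w) : x ∈ H, w ∈ ∂φ(x) }. Assume there exist h₀ ∈ H, R₀ > 0 and a₀ ∈ ℝ such that φ(h₀ + x) ≤ a₀ for every x ∈ X with ‖x‖_X ≤ R₀. Then there exist constants r₀, a₁, a₂ > 0 such that r₀‖y‖_{X*} ≤ (y, x − h₀) + a₁|x|² + a₂ for all (x,y) ∈ A; that is, A satisfies condition (H₁-ii). -/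
open MeasureTheory Set Filter
open scoped RealInnerProductSpace Topology NNReal

noncomputable section

variable {H : Type*} [NormedAddCommGroup H] [InnerProductSpace ℝ H] [CompleteSpace H]
variable {X : Type*} [NormedAddCommGroup X] [NormedSpace ℝ X]

/-- The dual norm `‖y‖_{X*} = sup { ⟪y, j x⟫ : ‖x‖_X ≤ 1 }` of `y ∈ H`, relative to the
embedding `j : X → H`. -/
def dualNorm (j : X →L[ℝ] H) (y : H) : ℝ :=
  sSup ((fun x : X => ⟪y, j x⟫) '' {x : X | ‖x‖ ≤ 1})

/-- The set of all partition variation sums of `g` on `[0,T]`, with increments measured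
by the gauge `N`. -/
def varSums (N : H → ℝ) (g : ℝ → H) (T : ℝ) : Set ℝ :=
  { v | ∃ m : ℕ, ∃ t : Fin (m + 1) → ℝ, Monotone t ∧ t 0 = 0 ∧ t (Fin.last m) = T ∧
      v = ∑ i : Fin m, N (g (t i.succ) - g (t i.castSucc)) }

/-- `g` has bounded variation on `[0,T]` w.r.t. the gauge `N`. -/
def HasBV (N : H → ℝ) (g : ℝ → H) (T : ℝ) : Prop := BddAbove (varSums N g T)

/-- The total variation (BV norm) of `g` on `[0,T]` w.r.t. the gauge `N`. -/
def bvNorm (N : H → ℝ) (g : ℝ → H) (T : ℝ) : ℝ := sSup (varSums N g T)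

/-- A multivalued operator `A ⊆ H × H` is monotone. -/
def IsMonotoneOp (A : Set (H × H)) : Prop :=
  ∀ p ∈ A, ∀ q ∈ A, 0 ≤ ⟪p.2 - q.2, p.1 - q.1⟫

/-- A multivalued operator `A ⊆ H × H` is maximal monotone. -/
def IsMaximalMonotone (A : Set (H × H)) : Prop :=
  IsMonotoneOp A ∧ ∀ u v : H, (∀ p ∈ A, 0 ≤ ⟪v - p.2, u - p.1⟫) → (u, v) ∈ A

/-- The operator `A + αI`. -/
def addAlphaI (A : Set (H × H)) (α : ℝ) : Set (H × H) :=
  (fun p : H × H => (p.1, p.2 + α • p.1)) '' A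

/-- The domain `D(A)` of a multivalued operator. -/
def opDom (A : Set (H × H)) : Set H := {x | ∃ y, (x, y) ∈ A}

/-- Hypothesis (H₁): `A` is `α`-maximal monotone and satisfies the coercivity-type
inequality with constants `h₀, r₀, a₁, a₂`. -/
def HypH1 (A : Set (H × H)) (j : X →L[ℝ] H) (α : ℝ) (h₀ : H) (r₀ a₁ a₂ : ℝ) : Prop :=
  IsMaximalMonotone (addAlphaI A α) ∧ 0 < r₀ ∧ 0 < a₁ ∧ 0 < a₂ ∧
    ∀ p ∈ A, r₀ * dualNorm j p.2 ≤ ⟪p.2, p.1 - h₀⟫ + a₁ * ‖p.1‖ ^ 2 + a₂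

/-- `f ∈ W^{1,1}([0,T];H)`. -/
def MemW11 (f : ℝ → H) (T : ℝ) : Prop :=
  ∃ f' : ℝ → H, IntegrableOn f' (Icc 0 T) ∧
    ∀ t ∈ Icc (0:ℝ) T, f t = f 0 + ∫ s in (0:ℝ)..t, f' s

/-- `g ∈ W^{2,1}([0,T];H)`. -/
def MemW21 (g : ℝ → H) (T : ℝ) : Prop :=
  ∃ g' : ℝ → H, MemW11 g' T ∧ ∀ t ∈ Icc (0:ℝ) T, g t = g 0 + ∫ s in (0:ℝ)..t, g' s

/-- `(u,η) = GD(A;u₀,f,M)`: generalized deterministic solution of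
`du + Au(dt) ∋ f dt + dM`, `u(0) = u₀`, on `[0,T]`. -/
def IsGDSolution (A : Set (H × H)) (j : X →L[ℝ] H) (T : ℝ)
    (u₀ : H) (f : ℝ → H) (M : ℝ → X) (u η : ℝ → H) : Prop :=
  -- (d₁)
  (ContinuousOn u (Icc 0 T) ∧ (∀ t ∈ Icc (0:ℝ) T, u t ∈ closure (opDom A)) ∧ u 0 = u₀) ∧
  -- (d₂)
  (ContinuousOn η (Icc 0 T) ∧ η 0 = 0 ∧ HasBV (dualNorm j) η T) ∧
  -- (d₃)
  (∀ t ∈ Icc (0:ℝ) T, u t + η t = u₀ + (∫ s in (0:ℝ)..t, f s) + j (M t)) ∧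
  -- (d₄)
  ∃ (u0s : ℕ → H) (fs : ℕ → ℝ → H) (Ms : ℕ → ℝ → X) (us hs : ℕ → ℝ → H),
    (∀ n, u0s n ∈ opDom A) ∧
    (∀ n, MemW11 (fs n) T) ∧
    (∀ n, ContinuousOn (Ms n) (Icc 0 T) ∧ Ms n 0 = 0 ∧ MemW21 (fun t => j (Ms n t)) T) ∧
    (∀ n, ∃ L : ℝ≥0, LipschitzOnWith L (us n) (Icc 0 T)) ∧
    (∀ n, AEStronglyMeasurable (hs n) (volume.restrict (Ioc 0 T)) ∧
          ∃ C : ℝ, ∀ᵐ s ∂(volume.restrict (Ioc (0:ℝ) T)), ‖hs n s‖ ≤ C) ∧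
    (∀ n, ∀ᵐ s ∂(volume.restrict (Ioc (0:ℝ) T)), (us n s, hs n s) ∈ A) ∧
    (∀ n, ∀ t ∈ Icc (0:ℝ) T,
        us n t + (∫ s in (0:ℝ)..t, hs n s) =
          u0s n + (∫ s in (0:ℝ)..t, fs n s) + j (Ms n t)) ∧
    Tendsto u0s atTop (𝓝 u₀) ∧
    Tendsto (fun n => ∫ s in Icc (0:ℝ) T, ‖fs n s - f s‖) atTop (𝓝 0) ∧
    TendstoUniformlyOn Ms M atTop (Icc 0 T) ∧
    TendstoUniformlyOn us u atTop (Icc 0 T) ∧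
    TendstoUniformlyOn (fun n t => ∫ s in (0:ℝ)..t, hs n s) η atTop (Icc 0 T) ∧
    ∃ C : ℝ, ∀ n, ∀ v ∈ varSums (dualNorm j) (fun t => ∫ s in (0:ℝ)..t, hs n s) T, v ≤ C

end

noncomputable section

variable {H : Type*} [NormedAddCommGroup H] [InnerProductSpace ℝ H]

/-- The subdifferential of `φ : H → ℝ ∪ {+∞}` at `x`:
`∂φ(x) = { w : φ(x) < +∞ and φ(x) + (w, z − x) ≤ φ(z) for all z }`. -/
def subdiff (φ : H → EReal) (x : H) : Set H :=
  {w : H | φ x ≠ ⊤ ∧ ∀ z : H, φ x + ((⟪w, z - x⟫ : ℝ) : EReal) ≤ φ z}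

end

/-!
Test `y = A₀x + w`, `w ∈ ∂φ(x)`, against `j v` with `‖v‖_X ≤ r₀` and put `z = h₀ + j v`, so that
`(y, j v) = (A₀x, z - x) + (w, z - x) + (y, x - h₀)`. The subgradient inequality bounds
`(w, z - x)` by `φ(z) - φ(x) ≤ a₀ - φ(x)`, and `φ(x)` is bounded below by a continuous affine
minorant of `φ` (Hahn–Banach applied to the closed convex epigraph). `α`-monotonicity gives
`(A₀x, z - x) ≤ (A₀z, z - x) + α|z - x|²`, and `A₀z` stays bounded because `z` ranges over a small
neighbourhood of `h₀`. Both bounds are quadratic in `|x|`, and the supremum over `v` is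
`r₀‖y‖_{X*}`.
-/

section AffineMinorant

variable {E : Type*} [AddCommGroup E] [Module ℝ E] {φ : E → EReal}

theorem convex_ereal_epigraph
    (hφconv : ∀ x y : E, ∀ a b : ℝ, 0 ≤ a → 0 ≤ b → a + b = 1 →
      φ (a • x + b • y) ≤ (a : EReal) * φ x + (b : EReal) * φ y) :
    Convex ℝ {p : E × ℝ | φ p.1 ≤ p.2} := by
  intro p hp q hq a b ha hb hab
  calc φ (a • p.1 + b • q.1) ≤ (a : EReal) * φ p.1 + (b : EReal) * φ q.1 :=
        hφconv _ _ a b ha hb hab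
    _ ≤ (a : EReal) * p.2 + (b : EReal) * q.2 :=
        add_le_add (mul_le_mul_of_nonneg_left hp (EReal.coe_nonneg.mpr ha))
          (mul_le_mul_of_nonneg_left hq (EReal.coe_nonneg.mpr hb))
    _ = ((a • p + b • q).2 : EReal) := by simp

omit [AddCommGroup E] [Module ℝ E] in
theorem LowerSemicontinuous.isClosed_ereal_epigraph [TopologicalSpace E]
    (hφ : LowerSemicontinuous φ) : IsClosed {p : E × ℝ | φ p.1 ≤ p.2} :=
  hφ.isClosed_epigraph.preimage (continuous_id.prodMap continuous_coe_real_ereal)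

variable [TopologicalSpace E] [IsTopologicalAddGroup E] [ContinuousSMul ℝ E]
  [LocallyConvexSpace ℝ E]

theorem exists_continuousLinearMap_add_le
    (hφbot : ∀ x, φ x ≠ ⊥) (hφproper : ∃ x, φ x ≠ ⊤)
    (hφconv : ∀ x y : E, ∀ a b : ℝ, 0 ≤ a → 0 ≤ b → a + b = 1 →
      φ (a • x + b • y) ≤ (a : EReal) * φ x + (b : EReal) * φ y)
    (hφlsc : LowerSemicontinuous φ) :
    ∃ (ℓ : StrongDual ℝ E) (b : ℝ), ∀ z, ((ℓ z + b : ℝ) : EReal) ≤ φ z := by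
  obtain ⟨x₀, hx₀⟩ := hφproper
  set t₀ := (φ x₀).toReal
  have hφx₀ : φ x₀ = t₀ := (EReal.coe_toReal hx₀ (hφbot x₀)).symm
  have hnotMem : (x₀, t₀ - 1) ∉ {p : E × ℝ | φ p.1 ≤ p.2} := by
    simp only [mem_ofPred_eq, hφx₀, EReal.coe_le_coe_iff]
    linarith
  obtain ⟨f, u, hfu, hlt⟩ := geometric_hahn_banach_point_closed (convex_ereal_epigraph hφconv)
    hφlsc.isClosed_ereal_epigraph hnotMem
  have hsplit : ∀ (z : E) (r : ℝ), f (z, r) = f (z, 0) + r * f (0, 1) := fun z r => by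
    rw [← smul_eq_mul, ← map_smul, ← map_add, Prod.smul_mk, smul_zero, smul_eq_mul, mul_one,
      Prod.mk_add_mk, add_zero, zero_add]
  set c := f (0, 1)
  -- The separating hyperplane is not vertical: it lies strictly between `(x₀, t₀ - 1)` and
  -- `(x₀, t₀)`.
  have hc : 0 < c := by
    have h := hlt (x₀, t₀) (by simp [hφx₀])
    rw [hsplit] at h hfu
    linarith
  refine ⟨-c⁻¹ • f.comp (.inl ℝ E ℝ), u / c, fun z => ?_⟩
  induction hz : φ z using EReal.rec with
  | bot => exact absurd hz (hφbot z)
  | top => exact le_top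
  | coe s =>
    have h := hlt (z, s) (by simp [hz])
    rw [hsplit] at h
    rw [EReal.coe_le_coe_iff]
    simp only [smul_apply, ContinuousLinearMap.comp_apply,
      ContinuousLinearMap.inl_apply, smul_eq_mul]
    rw [show -c⁻¹ * f (z, 0) + u / c = (u - f (z, 0)) / c by ring, div_le_iff₀ hc]
    linarith

end AffineMinorant

theorem ContinuousAt.exists_pos_forall_norm_le {α F : Type*} [PseudoMetricSpace α]
    [SeminormedAddCommGroup F] {f : α → F} {a : α} (hf : ContinuousAt f a) :
    ∃ ε > 0, ∀ v, dist v a ≤ ε → ‖f v‖ ≤ ‖f a‖ + 1 := by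
  obtain ⟨ε, hε, h⟩ := Metric.nhds_basis_closedBall.eventually_iff.mp
    (hf.norm.eventually (gt_mem_nhds (lt_add_one ‖f a‖)))
  exact ⟨ε, hε, fun v hv => (h hv).le⟩

theorem exists_pos_forall_add_mul_add_mul_sq_le (p q s : ℝ) :
    ∃ a₁ a₂ : ℝ, 0 < a₁ ∧ 0 < a₂ ∧ ∀ t : ℝ, p + q * t + s * t ^ 2 ≤ a₁ * t ^ 2 + a₂ := by
  refine ⟨|s| + |q| + 1, |p| + |q| + 1, by positivity, by positivity, fun t => ?_⟩
  have ht : |t| ≤ 1 + t ^ 2 := by nlinarith [sq_nonneg (|t| - 1), sq_abs t]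
  have hq : q * t ≤ |q| * (1 + t ^ 2) := calc
    q * t ≤ |q| * |t| := (le_abs_self _).trans (abs_mul q t).le
    _ ≤ |q| * (1 + t ^ 2) := mul_le_mul_of_nonneg_left ht (abs_nonneg q)
  nlinarith [le_abs_self p, le_abs_self s, sq_nonneg t]

section Inner

variable {H : Type*} [NormedAddCommGroup H] [InnerProductSpace ℝ H]

theorem mul_dualNorm_le {X : Type*} [NormedAddCommGroup X] [NormedSpace ℝ X] {j : X →L[ℝ] H}
    {y : H} {r B : ℝ} (hr : 0 < r) (h : ∀ v : X, ‖v‖ ≤ r → ⟪y, j v⟫ ≤ B) :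
    r * dualNorm j y ≤ B := by
  rw [← le_div_iff₀' hr]
  refine csSup_le ⟨_, 0, by simp, rfl⟩ ?_
  rintro _ ⟨v, hv, rfl⟩
  rw [le_div_iff₀' hr, ← real_inner_smul_right, ← map_smul]
  refine h _ ?_
  rw [norm_smul, Real.norm_of_nonneg hr.le]
  exact mul_le_of_le_one_right hr.le hv

theorem inner_sub_le_of_mem_subdiff {φ : H → EReal} {x z w : H} {a b : ℝ}
    (hw : w ∈ subdiff φ x) (hb : (b : EReal) ≤ φ x) (ha : φ z ≤ a) : ⟪w, z - x⟫ ≤ a - b := by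
  obtain ⟨htop, hsub⟩ := hw
  lift φ x to ℝ using ⟨htop, ne_bot_of_le_ne_bot (EReal.coe_ne_bot b) hb⟩ with p hp
  have h : ((p + ⟪w, z - x⟫ : ℝ) : EReal) ≤ a := (hsub z).trans ha
  have hbp : b ≤ p := by exact_mod_cast hb
  have : p + ⟪w, z - x⟫ ≤ a := by exact_mod_cast h
  linarith

theorem inner_sub_le_of_forall_inner_add_mul_sq_nonneg {A₀ : H → H} {α c d : ℝ} {z : H}
    (hA₀ : ∀ x y : H, 0 ≤ ⟪A₀ x - A₀ y, x - y⟫ + α * ‖x - y‖ ^ 2)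
    (hc : ‖A₀ z‖ ≤ c) (hd : ‖z‖ ≤ d) (x : H) :
    ⟪A₀ x, z - x⟫ ≤ c * (‖x‖ + d) + |α| * (‖x‖ + d) ^ 2 := by
  have hzx : ‖z - x‖ ≤ ‖x‖ + d := (norm_sub_le z x).trans (by linarith)
  have hmono := hA₀ z x
  rw [inner_sub_left] at hmono
  calc ⟪A₀ x, z - x⟫ ≤ ⟪A₀ z, z - x⟫ + α * ‖z - x‖ ^ 2 := by linarith
    _ ≤ ‖A₀ z‖ * ‖z - x‖ + |α| * ‖z - x‖ ^ 2 := by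
        gcongr
        · exact real_inner_le_norm _ _
        · exact le_abs_self α
    _ ≤ c * (‖x‖ + d) + |α| * (‖x‖ + d) ^ 2 := by gcongr; exact (norm_nonneg _).trans hc

end Inner

theorem hypH1_of_subdifferential_structure_general
    {H : Type*} [NormedAddCommGroup H] [InnerProductSpace ℝ H]
    {X : Type*} [NormedAddCommGroup X] [NormedSpace ℝ X]
    (j : X →L[ℝ] H)
    (α : ℝ) (A₀ : H → H) (hA₀cont : Continuous A₀)
    (hA₀mono : ∀ x y : H, 0 ≤ ⟪A₀ x - A₀ y, x - y⟫ + α * ‖x - y‖ ^ 2)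
    (φ : H → EReal) (hφbot : ∀ x, φ x ≠ ⊥) (hφproper : ∃ x, φ x ≠ ⊤)
    (hφconv : ∀ x y : H, ∀ a b : ℝ, 0 ≤ a → 0 ≤ b → a + b = 1 →
      φ (a • x + b • y) ≤ (a : EReal) * φ x + (b : EReal) * φ y)
    (hφlsc : LowerSemicontinuous φ)
    (h₀ : H) (R₀ : ℝ) (hR₀ : 0 < R₀) (a₀ : ℝ)
    (hφbdd : ∀ x : X, ‖x‖ ≤ R₀ → φ (h₀ + j x) ≤ (a₀ : EReal)) :
    ∃ r₀ a₁ a₂ : ℝ, 0 < r₀ ∧ 0 < a₁ ∧ 0 < a₂ ∧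
      ∀ x w : H, w ∈ subdiff φ x →
        r₀ * dualNorm j (A₀ x + w) ≤ ⟪A₀ x + w, x - h₀⟫ + a₁ * ‖x‖ ^ 2 + a₂ := by
  obtain ⟨ℓ, b, hφ_ge⟩ := exists_continuousLinearMap_add_le hφbot hφproper hφconv hφlsc
  obtain ⟨ε, hε, hA₀_near⟩ : ∃ ε > 0, ∀ v : X, ‖v‖ ≤ ε → ‖A₀ (h₀ + j v)‖ ≤ ‖A₀ h₀‖ + 1 := by
    simpa using ((hA₀cont.comp (continuous_const.add j.continuous)).continuousAt
      (x := (0 : X))).exists_pos_forall_norm_le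
  set c := ‖A₀ h₀‖ + 1
  set d := ‖h₀‖ + ‖j‖ * R₀
  obtain ⟨a₁, a₂, ha₁, ha₂, hquad⟩ := exists_pos_forall_add_mul_add_mul_sq_le
    (c * d + |α| * d ^ 2 + a₀ - b) (c + 2 * |α| * d + ‖ℓ‖) |α|
  have hr₀ : 0 < min R₀ ε := lt_min hR₀ hε
  refine ⟨min R₀ ε, a₁, a₂, hr₀, ha₁, ha₂, fun x w hw => mul_dualNorm_le hr₀ fun v hv => ?_⟩
  have hvR₀ : ‖v‖ ≤ R₀ := hv.trans (min_le_left _ _)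
  have hz : ‖h₀ + j v‖ ≤ d := (norm_add_le _ _).trans <| add_le_add_right
    ((j.le_opNorm v).trans (mul_le_mul_of_nonneg_left hvR₀ (norm_nonneg j))) _
  have hA₀x := inner_sub_le_of_forall_inner_add_mul_sq_nonneg hA₀mono
    (hA₀_near v (hv.trans (min_le_right _ _))) hz x
  have hwx := inner_sub_le_of_mem_subdiff hw (hφ_ge x) (hφbdd v hvR₀)
  have hℓx : -(‖ℓ‖ * ‖x‖) ≤ ℓ x :=
    neg_le_of_abs_le ((ℓ.le_opNorm x).trans' (Real.norm_eq_abs _).ge)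
  calc ⟪A₀ x + w, j v⟫ = ⟪A₀ x + w, (h₀ + j v - x) + (x - h₀)⟫ := by
        rw [sub_add_sub_cancel, add_sub_cancel_left]
    _ = ⟪A₀ x, h₀ + j v - x⟫ + ⟪w, h₀ + j v - x⟫ + ⟪A₀ x + w, x - h₀⟫ := by
        rw [inner_add_right, inner_add_left]
    _ ≤ ⟪A₀ x + w, x - h₀⟫ + a₁ * ‖x‖ ^ 2 + a₂ := by
        linear_combination hA₀x + hwx + hℓx + hquad ‖x‖

/-- **Theorem 2.2, (H₁-I) ⟹ (H₁-ii).** If `A = A₀ + ∂φ` with `A₀` continuous and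
`α`-monotone and `φ` proper convex l.s.c. bounded above near `h₀` along the `X`-ball of
radius `R₀`, then `A` satisfies the coercivity condition (H₁-ii). -/
theorem hypH1_of_subdifferential_structure
    {H : Type*} [NormedAddCommGroup H] [InnerProductSpace ℝ H] [CompleteSpace H]
    [SecondCountableTopology H]
    {X : Type*} [NormedAddCommGroup X] [NormedSpace ℝ X]
    [SecondCountableTopology X] [SecondCountableTopology (StrongDual ℝ X)]
    (j : X →L[ℝ] H) (hj_inj : Function.Injective j) (hj_dense : DenseRange (⇑j))
    (α : ℝ) (A₀ : H → H) (hA₀cont : Continuous A₀)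
    (hA₀mono : ∀ x y : H, 0 ≤ ⟪A₀ x - A₀ y, x - y⟫ + α * ‖x - y‖ ^ 2)
    (φ : H → EReal) (hφbot : ∀ x, φ x ≠ ⊥) (hφproper : ∃ x, φ x ≠ ⊤)
    (hφconv : ∀ x y : H, ∀ a b : ℝ, 0 ≤ a → 0 ≤ b → a + b = 1 →
      φ (a • x + b • y) ≤ (a : EReal) * φ x + (b : EReal) * φ y)
    (hφlsc : LowerSemicontinuous φ)
    (h₀ : H) (R₀ : ℝ) (hR₀ : 0 < R₀) (a₀ : ℝ)
    (hφbdd : ∀ x : X, ‖x‖ ≤ R₀ → φ (h₀ + j x) ≤ (a₀ : EReal)) :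
    ∃ r₀ a₁ a₂ : ℝ, 0 < r₀ ∧ 0 < a₁ ∧ 0 < a₂ ∧
      ∀ x w : H, w ∈ subdiff φ x →
        r₀ * dualNorm j (A₀ x + w) ≤ ⟪A₀ x + w, x - h₀⟫ + a₁ * ‖x‖ ^ 2 + a₂ :=
  hypH1_of_subdifferential_structure_general j α A₀ hA₀cont hA₀mono φ hφbot hφproper hφconv hφlsc h₀
    R₀ hR₀ a₀ hφbdd
end

section
/- Let α, β ∈ ℝ and a > 0. Let V be a real separable Banach space embedded in H by an injective continuous linear map with dense range (identify V with its image in H), and assume V ∩ X is dense in X. Let A be an α-maximal monotone operator on H with D(A) ⊆ V, and assume: (c) (y₁ − y₂, x₁ − x₂) + β|x₁ − x₂|² ≥ a‖x₁ − x₂‖_V² for all (x₁,y₁), (x₂,y₂) ∈ A; (d) there exist h₀ ∈ V and r₀ > 0 such that for every e ∈ V ∩ X with ‖e‖_X = 1 one has h₀ + r₀e ∈ D(A) and ‖A⁰(h₀ + r₀e)‖_{V*} ≤ r₀, where A⁰x denotes the element of minimal H-norm of Ax and ‖y‖_{V*} := sup{ (y, v) : v ∈ V, ‖v‖_V ≤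 1 }. Then there exist constants r₀', a₁, a₂ > 0 such that r₀'‖y‖_{X*} ≤ (y, x − h₀) + a₁|x|² + a₂ for all (x,y) ∈ A; that is, A satisfies condition (H₁-ii). -/
open MeasureTheory Set Filter
open scoped RealInnerProductSpace Topology NNReal

noncomputable section

variable {H : Type*} [NormedAddCommGroup H] [InnerProductSpace ℝ H]

/-- The dual norm `‖y‖_{V*}` of `y ∈ H` relative to the embedding `k : V → H`. -/
def vDualNorm {V : Type*} [NormedAddCommGroup V] [NormedSpace ℝ V]
    (k : V →L[ℝ] H) (y : H) : ℝ :=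
  sSup ((fun v : V => ⟪y, k v⟫) '' {v : V | ‖v‖ ≤ 1})

end

/-! Fix `(x, y) ∈ A` and a unit vector `e ∈ V ∩ X`, and let `z = A⁰(h₀ + r₀ e)`, so that
`(h₀ + r₀ e, z) ∈ A`. Then `r₀ ⟪y, e⟫ = ⟪y, x - h₀⟫ + ⟪y, h₀ + r₀ e - x⟫`, and the strong
monotonicity (c) applied to the two pairs bounds the last term by
`⟪z, h₀ + r₀ e - x⟫ - a ‖h₀ + r₀ e - x‖_V² + β |h₀ + r₀ e - x|²`. Since `‖z‖_{V*} ≤ r₀`, the first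
two terms together are at most `r₀² / 4a`, and `|h₀ + r₀ e|` is bounded independently of `e`.
This bounds `⟪y, e⟫` uniformly on the unit sphere of `V ∩ X`, and density of `V ∩ X` in `X`
turns that into a bound on `‖y‖_{X*}`. -/

section

variable {H V : Type*} [NormedAddCommGroup H] [InnerProductSpace ℝ H]
  [NormedAddCommGroup V] [NormedSpace ℝ V] (k : V →L[ℝ] H)

theorem dualNorm_eq_vDualNorm (y : H) : dualNorm k y = vDualNorm k y := rfl

theorem inner_le_mul_norm_of_forall_norm_eq_one {y : H} {c : ℝ} (S : Submodule ℝ V)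
    (h : ∀ u ∈ S, ‖u‖ = 1 → ⟪y, k u⟫ ≤ c) {u : V} (hu : u ∈ S) : ⟪y, k u⟫ ≤ c * ‖u‖ := by
  rcases eq_or_ne u 0 with rfl | hu0
  · simp
  have hpos : 0 < ‖u‖ := norm_pos_iff.mpr hu0
  have hunit : ‖(‖u‖⁻¹ • u)‖ = 1 := by
    rw [norm_smul, norm_inv, norm_norm, inv_mul_cancel₀ hpos.ne']
  have := h _ (S.smul_mem _ hu) hunit
  rw [map_smul, real_inner_smul_right, inv_mul_le_iff₀ hpos] at this
  linarith

theorem bddAbove_inner_unitBall (y : H) :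
    BddAbove ((fun v : V => ⟪y, k v⟫) '' {v : V | ‖v‖ ≤ 1}) := by
  refine ⟨‖y‖ * ‖k‖, ?_⟩
  rintro _ ⟨v, hv, rfl⟩
  calc ⟪y, k v⟫ ≤ ‖y‖ * ‖k v‖ := real_inner_le_norm _ _
    _ ≤ ‖y‖ * (‖k‖ * ‖v‖) := by gcongr; exact k.le_opNorm v
    _ ≤ ‖y‖ * ‖k‖ := by
      rw [← mul_one (‖y‖ * ‖k‖), mul_assoc]; gcongr; exact hv

theorem inner_le_vDualNorm_mul_norm (y : H) (u : V) : ⟪y, k u⟫ ≤ vDualNorm k y * ‖u‖ :=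
  inner_le_mul_norm_of_forall_norm_eq_one k ⊤
    (fun v _ hv => le_csSup (bddAbove_inner_unitBall k y) ⟨v, hv.le, rfl⟩) trivial

theorem vDualNorm_le_of_inner_le {y : H} {c : ℝ} (hc : 0 ≤ c)
    (h : ∀ u, ⟪y, k u⟫ ≤ c * ‖u‖) : vDualNorm k y ≤ c := by
  refine Real.sSup_le ?_ hc
  rintro _ ⟨u, hu, rfl⟩
  calc ⟪y, k u⟫ ≤ c * ‖u‖ := h u
    _ ≤ c := mul_le_of_le_one_right hc hu

theorem inner_le_mul_norm_of_dense {y : H} {c : ℝ} {S : Submodule ℝ V}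
    (hS : Dense (S : Set V)) (h : ∀ u ∈ S, ‖u‖ = 1 → ⟪y, k u⟫ ≤ c) (u : V) :
    ⟪y, k u⟫ ≤ c * ‖u‖ := by
  have hclosed : IsClosed {u : V | ⟪y, k u⟫ ≤ c * ‖u‖} :=
    isClosed_le ((innerSL ℝ y).continuous.comp k.continuous)
      (continuous_const.mul continuous_norm)
  have hsub : closure (S : Set V) ⊆ {u : V | ⟪y, k u⟫ ≤ c * ‖u‖} :=
    hclosed.closure_subset_iff.mpr fun _ hu =>
      inner_le_mul_norm_of_forall_norm_eq_one k S h hu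
  exact hsub (hS.closure_eq ▸ Set.mem_univ u)

theorem nonneg_of_inner_le_mul_norm [Nontrivial V] {y : H} {c : ℝ}
    (h : ∀ u, ⟪y, k u⟫ ≤ c * ‖u‖) : 0 ≤ c := by
  obtain ⟨u, hu⟩ := exists_ne (0 : V)
  have hneg := h (-u)
  rw [map_neg, inner_neg_right, norm_neg] at hneg
  have : 0 ≤ c * ‖u‖ := by linarith [h u]
  exact nonneg_of_mul_nonneg_left this (norm_pos_iff.mpr hu)

theorem mul_norm_sub_sq_le {E : Type*} [SeminormedAddCommGroup E] (β : ℝ) (p : E) {q : E}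
    {C : ℝ} (hq : ‖q‖ ≤ C) : β * ‖p - q‖ ^ 2 ≤ 2 * |β| * ‖p‖ ^ 2 + 2 * |β| * C ^ 2 := by
  have hpq : ‖p - q‖ ≤ ‖p‖ + C := (norm_sub_le p q).trans (by linarith)
  have hsq : ‖p - q‖ ^ 2 ≤ 2 * ‖p‖ ^ 2 + 2 * C ^ 2 := by
    nlinarith [norm_nonneg (p - q), norm_nonneg q, sq_nonneg (‖p‖ - C)]
  calc β * ‖p - q‖ ^ 2 ≤ |β| * ‖p - q‖ ^ 2 := by gcongr; exact le_abs_self β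
    _ ≤ |β| * (2 * ‖p‖ ^ 2 + 2 * C ^ 2) := by gcongr
    _ = 2 * |β| * ‖p‖ ^ 2 + 2 * |β| * C ^ 2 := by ring

theorem inner_sub_le_of_strongly_monotone_pair {a β r C : ℝ} (ha : 0 < a) {v w : V} {y z : H}
    (hz : vDualNorm k z ≤ r) (hw : ‖k w‖ ≤ C)
    (hvw : a * ‖v - w‖ ^ 2 ≤ ⟪y - z, k v - k w⟫ + β * ‖k v - k w‖ ^ 2) :
    ⟪y, k w - k v⟫ ≤ r ^ 2 / (4 * a) + 2 * |β| * ‖k v‖ ^ 2 + 2 * |β| * C ^ 2 := by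
  have hzwv : ⟪z, k w - k v⟫ ≤ r * ‖v - w‖ := by
    calc ⟪z, k w - k v⟫ ≤ vDualNorm k z * ‖w - v‖ := by
          simpa only [map_sub] using inner_le_vDualNorm_mul_norm k z (w - v)
      _ ≤ r * ‖v - w‖ := by rw [norm_sub_rev]; gcongr
  have hamgm : r * ‖v - w‖ - a * ‖v - w‖ ^ 2 ≤ r ^ 2 / (4 * a) := by
    rw [le_div_iff₀ (by positivity)]
    nlinarith [sq_nonneg (2 * a * ‖v - w‖ - r)]
  have hexpand : ⟪y - z, k v - k w⟫ = ⟪z, k w - k v⟫ - ⟪y, k w - k v⟫ := by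
    simp only [inner_sub_left, inner_sub_right]; ring
  linarith [mul_norm_sub_sq_le β (k v) hw]

end

theorem DenseRange.subsingleton {α β : Type*} [TopologicalSpace β] [T1Space β] [Subsingleton α]
    {f : α → β} (hf : DenseRange f) : Subsingleton β :=
  ⟨fun a b => (Set.subsingleton_range f).closure (hf.closure_eq ▸ Set.mem_univ a)
    (hf.closure_eq ▸ Set.mem_univ b)⟩

theorem hypH1_of_intermediate_space_general
    {H : Type*} [NormedAddCommGroup H] [InnerProductSpace ℝ H]
    {X : Type*} [NormedAddCommGroup X] [NormedSpace ℝ X]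
    {V : Type*} [NormedAddCommGroup V] [NormedSpace ℝ V]
    (j : X →L[ℝ] H) (hj_dense : DenseRange (⇑j))
    (k : V →L[ℝ] H)
    (hVX : Dense {x : X | j x ∈ Set.range k})
    (β a : ℝ) (ha : 0 < a)
    (A : Set (H × H))
    (hdom : opDom A ⊆ Set.range k)
    (hstrong : ∀ (v₁ v₂ : V) (y₁ y₂ : H), (k v₁, y₁) ∈ A → (k v₂, y₂) ∈ A →
      a * ‖v₁ - v₂‖ ^ 2 ≤ ⟪y₁ - y₂, k v₁ - k v₂⟫ + β * ‖k v₁ - k v₂‖ ^ 2)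
    (h₀ : V) (r₀ : ℝ) (hr₀ : 0 < r₀)
    (hd : ∀ e : X, ‖e‖ = 1 → j e ∈ Set.range k →
      ∃ y : H, (k h₀ + r₀ • j e, y) ∈ A ∧
        (∀ y' : H, (k h₀ + r₀ • j e, y') ∈ A → ‖y‖ ≤ ‖y'‖) ∧
        vDualNorm k y ≤ r₀) :
    ∃ r₀' a₁ a₂ : ℝ, 0 < r₀' ∧ 0 < a₁ ∧ 0 < a₂ ∧
      ∀ p ∈ A, r₀' * dualNorm j p.2 ≤ ⟪p.2, p.1 - k h₀⟫ + a₁ * ‖p.1‖ ^ 2 + a₂ := by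
  set C := ‖k h₀‖ + r₀ * ‖j‖
  refine ⟨r₀, 2 * |β| + 1, r₀ ^ 2 / (4 * a) + 2 * |β| * C ^ 2 + 1, hr₀, by positivity,
    by positivity, ?_⟩
  rintro ⟨_, y⟩ hxy
  obtain ⟨v, rfl⟩ := hdom ⟨y, hxy⟩
  set R := ⟪y, k v - k h₀⟫ + (2 * |β| + 1) * ‖k v‖ ^ 2 +
    (r₀ ^ 2 / (4 * a) + 2 * |β| * C ^ 2 + 1)
  have hunit : ∀ e ∈ (LinearMap.range (k : V →ₗ[ℝ] H)).comap (j : X →ₗ[ℝ] H),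
      ‖e‖ = 1 → ⟪y, j e⟫ ≤ R / r₀ := by
    intro e he_mem he
    obtain ⟨z, hz, -, hzV⟩ := hd e he he_mem
    obtain ⟨w, hw⟩ := hdom ⟨z, hz⟩
    have hkw : ‖k w‖ ≤ C := by
      calc ‖k w‖ ≤ ‖k h₀‖ + ‖r₀ • j e‖ := hw ▸ norm_add_le _ _
        _ = ‖k h₀‖ + r₀ * ‖j e‖ := by rw [norm_smul, Real.norm_of_nonneg hr₀.le]
        _ ≤ ‖k h₀‖ + r₀ * ‖j‖ := by gcongr; simpa [he] using j.le_opNorm e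
    have hsplit : r₀ * ⟪y, j e⟫ = ⟪y, k v - k h₀⟫ + ⟪y, k w - k v⟫ := by
      rw [← real_inner_smul_right, ← inner_add_right, hw]; abel_nf
    rw [le_div_iff₀' hr₀, hsplit]
    linarith [inner_sub_le_of_strongly_monotone_pair k ha hzV hkw (hstrong v w y z hxy (hw ▸ hz)),
      sq_nonneg ‖k v‖]
  have hbound := inner_le_mul_norm_of_dense j hVX hunit
  have hR : 0 ≤ R / r₀ := by
    rcases subsingleton_or_nontrivial X with hX | hX
    · have := hj_dense.subsingleton
      simp only [R, Subsingleton.elim y 0, Subsingleton.elim (k v) 0, inner_zero_left, norm_zero]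
      positivity
    · exact nonneg_of_inner_le_mul_norm j hbound
  calc r₀ * dualNorm j y ≤ r₀ * (R / r₀) := by
        rw [dualNorm_eq_vDualNorm]; gcongr; exact vDualNorm_le_of_inner_le j hR hbound
    _ = R := mul_div_cancel₀ R hr₀.ne'

/-- **Theorem 2.2, (H₁-II) ⟹ (H₁-ii).** If `A` is `α`-maximal monotone with
`D(A) ⊆ V` for a separable Banach space `V` densely embedded in `H` with `V ∩ X` dense in
`X`, strengthened monotonicity (c), and the resolvent-type bound (d) on the minimal
sections `A⁰(h₀ + r₀ e)`, then `A` satisfies the coercivity condition (H₁-ii). -/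
theorem hypH1_of_intermediate_space
    {H : Type*} [NormedAddCommGroup H] [InnerProductSpace ℝ H] [CompleteSpace H]
    [SecondCountableTopology H]
    {X : Type*} [NormedAddCommGroup X] [NormedSpace ℝ X]
    [SecondCountableTopology X] [SecondCountableTopology (StrongDual ℝ X)]
    {V : Type*} [NormedAddCommGroup V] [NormedSpace ℝ V] [SecondCountableTopology V]
    (j : X →L[ℝ] H) (hj_inj : Function.Injective j) (hj_dense : DenseRange (⇑j))
    (k : V →L[ℝ] H) (hk_inj : Function.Injective k) (hk_dense : DenseRange (⇑k))
    (hVX : Dense {x : X | j x ∈ Set.range k})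
    (α β a : ℝ) (ha : 0 < a)
    (A : Set (H × H)) (hA : IsMaximalMonotone (addAlphaI A α))
    (hdom : opDom A ⊆ Set.range k)
    (hstrong : ∀ (v₁ v₂ : V) (y₁ y₂ : H), (k v₁, y₁) ∈ A → (k v₂, y₂) ∈ A →
      a * ‖v₁ - v₂‖ ^ 2 ≤ ⟪y₁ - y₂, k v₁ - k v₂⟫ + β * ‖k v₁ - k v₂‖ ^ 2)
    (h₀ : V) (r₀ : ℝ) (hr₀ : 0 < r₀)
    (hd : ∀ e : X, ‖e‖ = 1 → j e ∈ Set.range k →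
      ∃ y : H, (k h₀ + r₀ • j e, y) ∈ A ∧
        (∀ y' : H, (k h₀ + r₀ • j e, y') ∈ A → ‖y‖ ≤ ‖y'‖) ∧
        vDualNorm k y ≤ r₀) :
    ∃ r₀' a₁ a₂ : ℝ, 0 < r₀' ∧ 0 < a₁ ∧ 0 < a₂ ∧
      ∀ p ∈ A, r₀' * dualNorm j p.2 ≤ ⟪p.2, p.1 - k h₀⟫ + a₁ * ‖p.1‖ ^ 2 + a₂ :=
  hypH1_of_intermediate_space_general j hj_dense k hVX β a ha A hdom hstrong h₀ r₀ hr₀ hd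
end

section
/- Let A be a multivalued operator on H and a ≥ 0 a constant such that (y₁ − y₂, x₁ − x₂) ≥ a|x₁ − x₂|² for all (x₁,y₁), (x₂,y₂) ∈ A. Let ε > 0 and let J_ε : H → H be a map such that for every x ∈ H, (x − J_ε x)/ε ∈ A(J_ε x); set A_ε x := (x − J_ε x)/ε. Then for every θ ∈ [0,1) with ε a θ ≤ 1 − θ, one has (A_ε u − A_ε v, u − v) ≥ a θ |u − v|² for all u, v ∈ H. -/
open scoped RealInnerProductSpace

/-- **Lemma 4.1.** If `A` is strongly monotone with constant `a ≥ 0` and `J_ε` is a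
resolvent of `A` (i.e. `(x − J_ε x)/ε ∈ A(J_ε x)` for all `x`), then for every
`θ ∈ [0,1)` with `ε a θ ≤ 1 − θ`, the Yosida approximation `A_ε x = (x − J_ε x)/ε`
satisfies `(A_ε u − A_ε v, u − v) ≥ a θ |u − v|²`. -/
theorem yosida_strong_monotonicity
    {H : Type*} [NormedAddCommGroup H] [InnerProductSpace ℝ H] [CompleteSpace H]
    (A : Set (H × H)) (a : ℝ) (ha : 0 ≤ a)
    (hmono : ∀ p ∈ A, ∀ q ∈ A, a * ‖p.1 - q.1‖ ^ 2 ≤ ⟪p.2 - q.2, p.1 - q.1⟫)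
    (ε : ℝ) (hε : 0 < ε) (J : H → H)
    (hJ : ∀ x : H, (J x, ε⁻¹ • (x - J x)) ∈ A)
    (θ : ℝ) (hθ0 : 0 ≤ θ) (hθ1 : θ < 1) (hεθ : ε * a * θ ≤ 1 - θ) :
    ∀ u v : H,
      a * θ * ‖u - v‖ ^ 2 ≤ ⟪ε⁻¹ • (u - J u) - ε⁻¹ • (v - J v), u - v⟫ := by
  intro u v
  set w : H := J u - J v with hw
  set z : H := ε⁻¹ • (u - J u) - ε⁻¹ • (v - J v) with hz
  have hmono' := hmono (J u, ε⁻¹ • (u - J u)) (hJ u) (J v, ε⁻¹ • (v - J v)) (hJ v)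
  simp only at hmono'
  have hd : u - v = w + ε • z := by
    rw [hz, hw]; simp only [smul_sub, smul_smul, mul_inv_cancel₀ hε.ne', one_smul]
    abel
  have h1 : ⟪z, u - v⟫ = ⟪z, w⟫ + ε * ‖z‖ ^ 2 := by
    rw [hd, inner_add_right, real_inner_smul_right, real_inner_self_eq_norm_sq]
  have h2 : ‖u - v‖ ^ 2 = ‖w‖ ^ 2 + 2 * ε * ⟪z, w⟫ + ε ^ 2 * ‖z‖ ^ 2 := by
    rw [hd, norm_add_sq_real, real_inner_smul_right, norm_smul, Real.norm_eq_abs,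
      abs_of_pos hε, real_inner_comm]
    ring
  have cs : ⟪z, w⟫ ≤ ‖z‖ * ‖w‖ := real_inner_le_norm z w
  have hs : a * ‖w‖ ^ 2 ≤ ⟪z, w⟫ := hmono'
  rw [real_inner_comm] at h1
  rw [show ⟪ε⁻¹ • (u - J u) - ε⁻¹ • (v - J v), u - v⟫ = ⟪u - v, z⟫ from by rw [real_inner_comm],
    h1, h2]
  set W := ‖w‖
  set Z := ‖z‖
  set s := ⟪z, w⟫
  have hW : 0 ≤ W := norm_nonneg _
  have hZ : 0 ≤ Z := norm_nonneg _
  have hs0 : 0 ≤ s := le_trans (by positivity) hs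
  have k1 : 0 ≤ a * θ * ε := by positivity
  have key : (a*θ*ε)^2 ≤ (a*(1-θ)) * (ε*(1-a*θ*ε)) := by
    nlinarith [mul_nonneg k1 (by linarith : (0:ℝ) ≤ 1 - θ - a*θ*ε),
      mul_nonneg (mul_nonneg (mul_nonneg ha (by linarith : (0:ℝ) ≤ 1-θ)) hε.le)
        (by linarith : (0:ℝ) ≤ 1 - a*θ*ε - θ)]
  have hQ : 0 ≤ a*(1-θ)*W^2 + ε*(1-a*θ*ε)*Z^2 - 2*(a*θ*ε)*(W*Z) := by
    rcases eq_or_lt_of_le ha with rfl | ha'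
    · nlinarith [sq_nonneg Z, hε.le]
    · nlinarith [sq_nonneg (a*(1-θ)*W - (a*θ*ε)*Z),
        mul_nonneg (by nlinarith : (0:ℝ) ≤ (a*(1-θ)) * (ε*(1-a*θ*ε)) - (a*θ*ε)^2) (sq_nonneg Z),
        mul_pos ha' (by linarith : (0:ℝ) < 1 - θ)]
  have h3 : 0 ≤ a*θ*ε*(Z*W - s) := mul_nonneg k1 (by linarith)
  nlinarith [hQ, hs, h3]
end

section
/- Let α ∈ ℝ and suppose A satisfies hypothesis (H₁) with constants h₀, r₀, a₁, a₂. For each ε ∈ (0,1] let J_ε : H → H be the resolvent of A + αI and A^α_ε the associated Yosida approximation, and assume A + αI is monotone (so each J_ε is nonexpansive). Then there exist constants b₁, b₂ > 0, depending only on α, |h₀|, a₁, a₂, the norm of the embedding j : X → H, and |J₁ 0| (the resolvent at 0 with ε = 1), such that for every x ∈ H and every ε with 0 < ε < 1/(|α|+1): r₀ ‖A^α_ε x − α x‖_{X*} ≤ ( A^α_ε x − α x, x − h₀ ) + b₁|x|² + b₂. -/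
open MeasureTheory Set Filter
open scoped RealInnerProductSpace Topology NNReal

noncomputable section

variable {H : Type*} [NormedAddCommGroup H] [InnerProductSpace ℝ H] [CompleteSpace H]

/-- `J` is the resolvent `(I + ε(A + αI))⁻¹` of `A + αI`:
for every `x`, `(x − Jx)/ε − αJx ∈ A(Jx)`. The Yosida approximation of `A + αI` is then
`A^α_ε x = (x − Jx)/ε`. -/
def IsResolventOf (A : Set (H × H)) (α ε : ℝ) (J : H → H) : Prop :=
  ∀ x : H, (J x, ε⁻¹ • (x - J x) - α • J x) ∈ A

end

/-!
With `y = J_ε x`, the pair `(y, A^α_ε x - α y)` lies in `A`, so (H₁) holds there. Replacing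
`α y` by `α x` moves the dual norm by at most `‖j‖ |α| ‖x - y‖` and the pairing with `x - h₀` by
`O(|α| ‖x - y‖ (‖x‖ + ‖y‖))`, while the term `ε⁻¹ ‖x - y‖²` that appears has the right sign and
is dropped. Monotonicity of `A + αI`, tested against the pair `(J₁ 0, -J₁ 0) ∈ A + αI`, gives
`‖J_ε x‖ ≤ ‖x‖ + 3 ‖J₁ 0‖` for `ε ≤ 1`, so every error term is quadratic in `‖x‖`.
-/

section DualNorm

variable {H : Type*} [NormedAddCommGroup H] [InnerProductSpace ℝ H]
  {X : Type*} [NormedAddCommGroup X] [NormedSpace ℝ X]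

lemma inner_apply_le_of_norm_le_one (j : X →L[ℝ] H) (y : H) {x : X} (hx : ‖x‖ ≤ 1) :
    ⟪y, j x⟫ ≤ ‖y‖ * ‖j‖ :=
  (real_inner_le_norm _ _).trans (by gcongr; exact j.unit_le_opNorm x hx)

lemma dualNorm_le_add (j : X →L[ℝ] H) (w z : H) :
    dualNorm j w ≤ dualNorm j z + ‖j‖ * ‖w - z‖ := by
  refine csSup_le ⟨_, 0, by simp, rfl⟩ ?_
  rintro _ ⟨x, hx, rfl⟩
  have hz : ⟪z, j x⟫ ≤ dualNorm j z :=
    le_csSup ⟨‖z‖ * ‖j‖, by rintro _ ⟨x', hx', rfl⟩; exact inner_apply_le_of_norm_le_one j z hx'⟩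
      ⟨x, hx, rfl⟩
  have hwz := inner_apply_le_of_norm_le_one j (w - z) hx
  rw [inner_sub_left] at hwz
  linarith

end DualNorm

section Resolvent

variable {H : Type*} [NormedAddCommGroup H] [InnerProductSpace ℝ H]

lemma mem_addAlphaI {A : Set (H × H)} {α : ℝ} {y z : H} (h : (y, z) ∈ A) :
    (y, z + α • y) ∈ addAlphaI A α :=
  ⟨(y, z), h, rfl⟩

lemma real_mul_inner_le (α : ℝ) (a b : H) : α * ⟪a, b⟫ ≤ |α| * (‖a‖ * ‖b‖) := by
  rw [← real_inner_smul_left, ← Real.norm_eq_abs, ← mul_assoc, ← norm_smul]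
  exact real_inner_le_norm _ _

/-- Nonexpansiveness of the resolvent: `y = J_ε x` and `u = J_ε (u + ε v)`. -/
lemma IsMonotoneOp.norm_sub_le_of_resolvent {B : Set (H × H)} (hB : IsMonotoneOp B) {ε : ℝ}
    (hε : 0 < ε) {x y u v : H} (hy : (y, ε⁻¹ • (x - y)) ∈ B) (hu : (u, v) ∈ B) :
    ‖y - u‖ ≤ ‖x - (u + ε • v)‖ := by
  have hscaled : ε • (ε⁻¹ • (x - y) - v) = (x - (u + ε • v)) - (y - u) := by
    rw [smul_sub, smul_smul, mul_inv_cancel₀ hε.ne', one_smul]; abel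
  have hmono : 0 ≤ ⟪(x - (u + ε • v)) - (y - u), y - u⟫ := by
    rw [← hscaled, real_inner_smul_left]
    exact mul_nonneg hε.le (hB _ hy _ hu)
  rw [inner_sub_left, real_inner_self_eq_norm_sq] at hmono
  have hcs := real_inner_le_norm (x - (u + ε • v)) (y - u)
  nlinarith [norm_nonneg (y - u), norm_nonneg (x - (u + ε • v))]

lemma IsMonotoneOp.norm_resolvent_le {B : Set (H × H)} (hB : IsMonotoneOp B) {ε : ℝ}
    (hε : 0 < ε) (hε1 : ε ≤ 1) {x y x₀ : H} (hy : (y, ε⁻¹ • (x - y)) ∈ B) (hx₀ : (x₀, -x₀) ∈ B) :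
    ‖y‖ ≤ ‖x‖ + 3 * ‖x₀‖ := by
  have h := hB.norm_sub_le_of_resolvent hε hy hx₀
  have hx : ‖x - (x₀ + ε • -x₀)‖ ≤ ‖x‖ + ‖x₀‖ + ε * ‖x₀‖ := by
    refine (norm_sub_le _ _).trans ?_
    rw [add_assoc]
    gcongr
    exact (norm_add_le _ _).trans (by rw [norm_smul, norm_neg, Real.norm_of_nonneg hε.le])
  have hεx₀ : ε * ‖x₀‖ ≤ ‖x₀‖ := mul_le_of_le_one_left (norm_nonneg _) hε1
  linarith [norm_le_norm_add_norm_sub' y x₀]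

end Resolvent

section Yosida

variable {H : Type*} [NormedAddCommGroup H] [InnerProductSpace ℝ H]
  {X : Type*} [NormedAddCommGroup X] [NormedSpace ℝ X]

lemma inner_yosida_sub_ge {ε : ℝ} (hε : 0 < ε) (α : ℝ) (x y h₀ : H) :
    ⟪ε⁻¹ • (x - y) - α • y, y - h₀⟫ - |α| * ‖x - y‖ * (‖y‖ + ‖x - h₀‖) ≤
      ⟪ε⁻¹ • (x - y) - α • x, x - h₀⟫ := by
  have hsplit : ⟪ε⁻¹ • (x - y) - α • x, x - h₀⟫ = ⟪ε⁻¹ • (x - y) - α • y, y - h₀⟫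
      + ε⁻¹ * ‖x - y‖ ^ 2 - α * ⟪y, x - y⟫ - α * ⟪x - y, x - h₀⟫ := by
    have hw : ε⁻¹ • (x - y) - α • x = (ε⁻¹ • (x - y) - α • y) - α • (x - y) := by
      simp only [smul_sub]; abel
    have hz : ⟪ε⁻¹ • (x - y) - α • y, x - y⟫ = ε⁻¹ * ‖x - y‖ ^ 2 - α * ⟪y, x - y⟫ := by
      rw [inner_sub_left, real_inner_smul_left, real_inner_smul_left, real_inner_self_eq_norm_sq]
    have hxh : x - h₀ = (y - h₀) + (x - y) := by abel
    rw [hw, inner_sub_left, real_inner_smul_left, hxh, inner_add_right, hz, ← hxh]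
    ring
  have hsq : 0 ≤ ε⁻¹ * ‖x - y‖ ^ 2 := by positivity
  linarith [real_mul_inner_le α y (x - y), real_mul_inner_le α (x - y) (x - h₀)]

/-- Read `y` as `J_ε x`, so that `ε⁻¹ • (x - y)` is `A^α_ε x`. -/
lemma dualNorm_yosida_le {A : Set (H × H)} {j : X →L[ℝ] H} {h₀ : H} {r₀ a₁ a₂ : ℝ}
    (hA : ∀ p ∈ A, r₀ * dualNorm j p.2 ≤ ⟪p.2, p.1 - h₀⟫ + a₁ * ‖p.1‖ ^ 2 + a₂) (hr₀ : 0 ≤ r₀)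
    {α ε : ℝ} (hε : 0 < ε) {x y : H} (hy : (y, ε⁻¹ • (x - y) - α • y) ∈ A) :
    r₀ * dualNorm j (ε⁻¹ • (x - y) - α • x) ≤ ⟪ε⁻¹ • (x - y) - α • x, x - h₀⟫
      + (a₁ * ‖y‖ ^ 2 + a₂ + |α| * ‖x - y‖ * (r₀ * ‖j‖ + ‖y‖ + ‖x - h₀‖)) := by
  have hdiff : ‖(ε⁻¹ • (x - y) - α • x) - (ε⁻¹ • (x - y) - α • y)‖ = |α| * ‖x - y‖ := by
    rw [sub_sub_sub_cancel_left, ← smul_sub, norm_smul, Real.norm_eq_abs, norm_sub_rev]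
  have hN := mul_le_mul_of_nonneg_left
    (dualNorm_le_add j (ε⁻¹ • (x - y) - α • x) (ε⁻¹ • (x - y) - α • y)) hr₀
  rw [hdiff] at hN
  nlinarith [hA _ hy, inner_yosida_sub_ge hε α x y h₀]

end Yosida

lemma yosida_error_le {a₁ a₂ β γ p d e s : ℝ} (ha₁ : 0 ≤ a₁) (ha₂ : 0 ≤ a₂) (hβ : 0 ≤ β)
    (hγ : 0 ≤ γ) (hp₀ : 0 ≤ p) (he₀ : 0 ≤ e) (hp : p ≤ s) (hd : d ≤ 2 * s)
    (he : e ≤ s) (hs : 1 ≤ s) :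
    a₁ * p ^ 2 + a₂ + β * d * (γ + p + e) ≤ (a₁ + a₂ + 2 * β * (γ + 2)) * s ^ 2 := by
  have hsq : 1 ≤ s ^ 2 := one_le_pow₀ hs
  have hlin : γ + p + e ≤ (γ + 2) * s := by nlinarith
  calc a₁ * p ^ 2 + a₂ + β * d * (γ + p + e)
      ≤ a₁ * s ^ 2 + a₂ * s ^ 2 + β * (2 * s) * ((γ + 2) * s) := by
        gcongr
        exact le_mul_of_one_le_right ha₂ hsq
    _ = (a₁ + a₂ + 2 * β * (γ + 2)) * s ^ 2 := by ring

theorem yosida_inherits_H1_general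
    {H : Type*} [NormedAddCommGroup H] [InnerProductSpace ℝ H]
    {X : Type*} [NormedAddCommGroup X] [NormedSpace ℝ X]
    (j : X →L[ℝ] H)
    (α : ℝ) (A : Set (H × H)) (h₀ : H) (r₀ a₁ a₂ : ℝ)
    (hH1 : HypH1 A j α h₀ r₀ a₁ a₂)
    (J : ℝ → H → H)
    (hJ : ∀ ε ∈ Set.Ioc (0:ℝ) 1, IsResolventOf A α ε (J ε)) :
    ∃ b₁ b₂ : ℝ, 0 < b₁ ∧ 0 < b₂ ∧
      ∀ (x : H) (ε : ℝ), 0 < ε → ε < 1 / (|α| + 1) →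
        r₀ * dualNorm j (ε⁻¹ • (x - J ε x) - α • x) ≤
          ⟪ε⁻¹ • (x - J ε x) - α • x, x - h₀⟫ + b₁ * ‖x‖ ^ 2 + b₂ := by
  obtain ⟨⟨hmono, -⟩, hr₀, ha₁, ha₂, hA⟩ := hH1
  have hx₀ : (J 1 0, -J 1 0) ∈ addAlphaI A α := by
    simpa using mem_addAlphaI (α := α) (hJ 1 ⟨one_pos, le_rfl⟩ 0)
  set c := 3 * ‖J 1 0‖ + ‖h₀‖ + 1 with hc
  set K := a₁ + a₂ + 2 * |α| * (r₀ * ‖j‖ + 2)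
  refine ⟨2 * K, 2 * K * c ^ 2, by positivity, by positivity, fun x ε hε hεα => ?_⟩
  have hε1 : ε ≤ 1 := hεα.le.trans (div_le_one_of_le₀ (by linarith [abs_nonneg α]) (by positivity))
  have hy := hJ ε ⟨hε, hε1⟩ x
  have hyx := hmono.norm_resolvent_le hε hε1 (by simpa using mem_addAlphaI (α := α) hy) hx₀
  have herr := yosida_error_le (p := ‖J ε x‖) (d := ‖x - J ε x‖) (e := ‖x - h₀‖) (s := ‖x‖ + c)
    (γ := r₀ * ‖j‖) ha₁.le ha₂.le (abs_nonneg α) (by positivity) (norm_nonneg _) (norm_nonneg _)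
    (by linarith [norm_nonneg h₀])
    (by linarith [norm_sub_le x (J ε x), norm_nonneg h₀, norm_nonneg (J 1 0)])
    (by linarith [norm_sub_le x h₀, norm_nonneg (J 1 0)])
    (by linarith [norm_nonneg x, norm_nonneg h₀, norm_nonneg (J 1 0)])
  have hsq := mul_le_mul_of_nonneg_left (add_sq_le (a := ‖x‖) (b := c)) (by positivity : 0 ≤ K)
  linarith [dualNorm_yosida_le hA hr₀.le hε hy]

/-- **The Yosida approximations inherit (H₁-ii).** Under (H₁) there exist constants
`b₁, b₂ > 0` such that for all `x ∈ H` and `0 < ε < 1/(|α|+1)`,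
`r₀ ‖A^α_ε x − αx‖_{X*} ≤ (A^α_ε x − αx, x − h₀) + b₁|x|² + b₂`. -/
theorem yosida_inherits_H1
    {H : Type*} [NormedAddCommGroup H] [InnerProductSpace ℝ H] [CompleteSpace H]
    [SecondCountableTopology H]
    {X : Type*} [NormedAddCommGroup X] [NormedSpace ℝ X]
    [SecondCountableTopology X] [SecondCountableTopology (StrongDual ℝ X)]
    (j : X →L[ℝ] H) (hj_inj : Function.Injective j) (hj_dense : DenseRange (⇑j))
    (α : ℝ) (A : Set (H × H)) (h₀ : H) (r₀ a₁ a₂ : ℝ)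
    (hH1 : HypH1 A j α h₀ r₀ a₁ a₂)
    (J : ℝ → H → H)
    (hJ : ∀ ε ∈ Set.Ioc (0:ℝ) 1, IsResolventOf A α ε (J ε))
    (hmono : IsMonotoneOp (addAlphaI A α)) :
    ∃ b₁ b₂ : ℝ, 0 < b₁ ∧ 0 < b₂ ∧
      ∀ (x : H) (ε : ℝ), 0 < ε → ε < 1 / (|α| + 1) →
        r₀ * dualNorm j (ε⁻¹ • (x - J ε x) - α • x) ≤
          ⟪ε⁻¹ • (x - J ε x) - α • x, x - h₀⟫ + b₁ * ‖x‖ ^ 2 + b₂ :=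
  yosida_inherits_H1_general j α A h₀ r₀ a₁ a₂ hH1 J hJ
end
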